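/- arXiv:2604.27683 — 3 statements merged into one kernel-verified Lean document; each statement's English description precedes it below -/
import Mathlib

section
/- Let l, m, d, k, a be positive integers with a + kd ≤ m ≤ l, and set Δ = l - m + 1. Define I ⊆ {1,…,l} as the union of {x : 1 ≤ x < a} with, for each j = 0,…,k, the set of integers x with a + jd < x ≤ u_j (where u_j = a+(j+1)d-1 for j < k and u_k = l) satisfying l - x < m - (a + pd) for all 0 ≤ p ≤ j. Then the cardinality of I equals m - kd - 1 + k · max(0, d - l + m - 1). -/
attribute [local instance] Classical.propDecidable

lemma key_forall (l m d a j x : ℕ) :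
    (∀ p ∈ Finset.range (j + 1), l - x < m - (a + p * d)) ↔ l - x < m - (a + j * d) := by
  constructor
  · intro h; exact h j (Finset.mem_range.mpr (Nat.lt_succ_self j))
  · intro h p hp
    have hp' : p ≤ j := Nat.le_of_lt_succ (Finset.mem_range.mp hp)
    have hmul : p * d ≤ j * d := Nat.mul_le_mul_right d hp'
    exact lt_of_lt_of_le h (Nat.sub_le_sub_left (Nat.add_le_add_left hmul a) m)

lemma setEq (l m b u : ℕ) (hb : b ≤ m) (h2 : m ≤ l) (hu : u ≤ l)
    (P : ℕ → Prop) [DecidablePred P]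
    (hP : ∀ x, P x ↔ (b < x ∧ x ≤ u ∧ l - x < m - b)) :
    (Finset.Icc 1 l).filter P = Finset.Ioc (l - m + b) u := by
  ext x
  simp only [Finset.mem_filter, Finset.mem_Icc, Finset.mem_Ioc, hP]
  omega

/-- For positive integers `l, m, d, k, a` with `a + k*d ≤ m ≤ l`,
let `Δ = l - m + 1` and let `I ⊆ {1,…,l}` be the union of `{x : 1 ≤ x < a}`
with, for each `0 ≤ j ≤ k`, the set of `x` with `a + j*d < x ≤ u_j`
(`u_j = a + (j+1)*d - 1` for `j < k`, `u_k = l`) such that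
`l - x < m - (a + p*d)` for all `0 ≤ p ≤ j`. Then
`|I| = m - k*d - 1 + k * max 0 (d - l + m - 1)`. -/
theorem stmt_0 (l m d k a : ℕ) (hl : 1 ≤ l) (hm : 1 ≤ m) (hd : 1 ≤ d)
    (hk : 1 ≤ k) (ha : 1 ≤ a) (h1 : a + k * d ≤ m) (h2 : m ≤ l) :
    ((((Finset.Icc 1 l).filter (fun x => x < a)) ∪
        (Finset.range (k + 1)).biUnion (fun j =>
          (Finset.Icc 1 l).filter (fun x =>
            a + j * d < x ∧ x ≤ (if j < k then a + (j + 1) * d - 1 else l) ∧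
              ∀ p ∈ Finset.range (j + 1), l - x < m - (a + p * d)))).card : ℤ) =
      (m : ℤ) - k * d - 1 + k * max 0 ((d : ℤ) - l + m - 1) := by
  classical
  have hal : a ≤ l := le_trans (le_trans (Nat.le_add_right a (k * d)) h1) h2
  -- rewrite the first set
  have hA : ((Finset.Icc 1 l).filter (fun x => x < a)) = Finset.Ico 1 a := by
    ext x
    simp only [Finset.mem_filter, Finset.mem_Icc, Finset.mem_Ico]
    omega
  -- rewrite each set in the biUnion
  have hSj : ∀ j ∈ Finset.range (k + 1),
      (Finset.Icc 1 l).filter (fun x =>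
            a + j * d < x ∧ x ≤ (if j < k then a + (j + 1) * d - 1 else l) ∧
              ∀ p ∈ Finset.range (j + 1), l - x < m - (a + p * d))
      = Finset.Ioc (l - m + (a + j * d)) (if j < k then a + (j + 1) * d - 1 else l) := by
    intro j hj
    have hjk : j ≤ k := Nat.lt_succ_iff.mp (Finset.mem_range.mp hj)
    have hjd : j * d ≤ k * d := Nat.mul_le_mul_right d hjk
    have hb : a + j * d ≤ m := le_trans (Nat.add_le_add_left hjd a) h1
    have huu : (if j < k then a + (j + 1) * d - 1 else l) ≤ l := by
      split
      · next hlt =>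
        have hst : (j + 1) * d ≤ k * d := Nat.mul_le_mul_right d hlt
        have h3 : a + (j + 1) * d ≤ l := le_trans (le_trans (Nat.add_le_add_left hst a) h1) h2
        exact le_trans (Nat.sub_le _ _) h3
      · exact le_refl l
    ext x
    simp only [Finset.mem_filter, Finset.mem_Icc, Finset.mem_Ioc, key_forall]
    generalize (if j < k then a + (j + 1) * d - 1 else l) = u at huu ⊢
    generalize a + j * d = b at hb ⊢
    omega
  -- disjointness of the intervals
  have hdisj : ∀ j1 ∈ Finset.range (k + 1), ∀ j2 ∈ Finset.range (k + 1), j1 ≠ j2 →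
      Disjoint
        (Finset.Ioc (l - m + (a + j1 * d)) (if j1 < k then a + (j1 + 1) * d - 1 else l))
        (Finset.Ioc (l - m + (a + j2 * d)) (if j2 < k then a + (j2 + 1) * d - 1 else l)) := by
    have base : ∀ j1 j2 : ℕ, j1 < j2 → j2 ≤ k →
        Disjoint
          (Finset.Ioc (l - m + (a + j1 * d)) (if j1 < k then a + (j1 + 1) * d - 1 else l))
          (Finset.Ioc (l - m + (a + j2 * d)) (if j2 < k then a + (j2 + 1) * d - 1 else l)) := by
      intro j1 j2 h12 hj2
      have hlt : j1 < k := lt_of_lt_of_le h12 hj2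
      rw [if_pos hlt]
      have hst : (j1 + 1) * d ≤ j2 * d := Nat.mul_le_mul_right d h12
      have hle : a + (j1 + 1) * d - 1 ≤ l - m + (a + j2 * d) :=
        le_trans (Nat.sub_le _ _)
          (le_trans (Nat.add_le_add_left hst a) (Nat.le_add_left _ _))
      refine Finset.disjoint_left.mpr ?_
      intro x hx1 hx2
      rw [Finset.mem_Ioc] at hx1 hx2
      exact absurd (lt_of_lt_of_le hx2.1 (le_trans hx1.2 hle)) (lt_irrefl _)
    intro j1 hj1 j2 hj2 hne
    have hj1' : j1 ≤ k := Nat.lt_succ_iff.mp (Finset.mem_range.mp hj1)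
    have hj2' : j2 ≤ k := Nat.lt_succ_iff.mp (Finset.mem_range.mp hj2)
    rcases lt_or_gt_of_ne hne with h | h
    · exact base j1 j2 h hj2'
    · exact (base j2 j1 h hj1').symm
  -- disjointness of the first set from the union
  have hAB : Disjoint (Finset.Ico 1 a)
      ((Finset.range (k + 1)).biUnion (fun j =>
        Finset.Ioc (l - m + (a + j * d)) (if j < k then a + (j + 1) * d - 1 else l))) := by
    rw [Finset.disjoint_left]
    intro x hx hx2
    rw [Finset.mem_Ico] at hx
    rw [Finset.mem_biUnion] at hx2
    obtain ⟨j, hj, hxj⟩ := hx2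
    rw [Finset.mem_Ioc] at hxj
    have hge : a ≤ l - m + (a + j * d) :=
      le_trans (Nat.le_add_right a (j * d)) (Nat.le_add_left _ _)
    exact lt_irrefl x ((hx.2.trans_le hge).trans hxj.1)
  rw [hA, Finset.biUnion_congr rfl hSj, Finset.card_union_of_disjoint hAB,
    Finset.card_biUnion hdisj]
  simp only [Nat.card_Ioc, Nat.card_Ico]
  rw [Finset.sum_range_succ]
  have hlast : (if k < k then a + (k + 1) * d - 1 else l) - (l - m + (a + k * d))
      = m - (a + k * d) := by
    rw [if_neg (lt_irrefl k)]
    have h1' := h1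
    generalize k * d = t at h1' ⊢
    omega
  have hbody : ∀ j ∈ Finset.range k,
      (if j < k then a + (j + 1) * d - 1 else l) - (l - m + (a + j * d))
      = (m + d - 1) - l := by
    intro j hj
    have hjk : j < k := Finset.mem_range.mp hj
    rw [if_pos hjk]
    have hd' : (j + 1) * d = j * d + d := by ring
    have h4 : a + (j + 1) * d ≤ m := le_trans (Nat.add_le_add_left (Nat.mul_le_mul_right d hjk) a) h1
    rw [hd'] at h4 ⊢
    generalize j * d = t at h4 ⊢
    omega
  rw [Finset.sum_congr rfl hbody, Finset.sum_const, Finset.card_range, smul_eq_mul, hlast]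
  have hM : (((m + d - 1) - l : ℕ) : ℤ) = max 0 ((d : ℤ) - l + m - 1) := by
    rcases le_total (m + d - 1) l with h | h
    · rw [Nat.sub_eq_zero_of_le h, max_eq_left (by omega : (d : ℤ) - l + m - 1 ≤ 0)]
      simp
    · rw [max_eq_right (by omega : (0 : ℤ) ≤ (d : ℤ) - l + m - 1)]
      omega
  rw [← hM]
  push_cast [Nat.cast_sub ha, Nat.cast_sub h1]
  ring
end

section
/- Let m ≥ 1 and let p be the claw-shaped POP of size m whose maximal element is in position r (for any fixed r ∈ {1,…,m}), with the other m-1 elements pairwise incomparable. Then for n ≥ m, the number of permutations of {1,…,n} avoiding p is (m-1)! · (m-1)^{n-m+1}. -/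
/-- A permutation `π` of length `n` contains the claw-shaped POP of size `m`
whose unique maximal element sits in position `r` (the other `m-1` elements
being pairwise incomparable) iff there is a length-`m` subsequence whose
entry in position `r` exceeds all the other chosen entries. -/
def ContainsClaw {m n : ℕ} (r : Fin m) (π : Equiv.Perm (Fin n)) : Prop :=
  ∃ i : Fin m → Fin n, StrictMono i ∧ ∀ j : Fin m, j ≠ r → π (i j) < π (i r)

namespace ClawAux
open Equiv

lemma strictMono_gap {m k : ℕ} {f : Fin m → Fin k} (hf : StrictMono f) :
    ∀ (d : ℕ) (a b : Fin m), a.val + d = b.val → (f a).val + d ≤ (f b).val := by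
  intro d
  induction d with
  | zero =>
    intro a b h
    have : a = b := Fin.ext (by omega)
    subst this; omega
  | succ d ih =>
    intro a b h
    have hb1 : b.val - 1 < m := by omega
    have h1 : (f a).val + d ≤ (f ⟨b.val - 1, hb1⟩).val :=
      ih a ⟨b.val - 1, hb1⟩ (show a.val + d = b.val - 1 by omega)
    have h2 : f ⟨b.val - 1, hb1⟩ < f b := hf (show (⟨b.val - 1, hb1⟩ : Fin m) < b by
      rw [Fin.lt_def]; exact show b.val - 1 < b.val by omega)
    rw [Fin.lt_def] at h2
    omega

def Boundary (m : ℕ) (r : Fin m) {n : ℕ} (t : Fin (n + 1)) : Prop :=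
  t.val < r.val ∨ n - t.val < m - 1 - r.val

def bfun {m n : ℕ} (r : Fin m) (hn : m - 1 ≤ n) (k : Fin (m - 1)) :
    {t : Fin (n + 1) // Boundary m r t} :=
  if h : k.val < r.val then ⟨⟨k.val, by omega⟩, Or.inl (by simpa using h)⟩
  else ⟨⟨k.val + (n + 2 - m), by have := k.isLt; have := r.isLt; omega⟩,
    Or.inr (by have := k.isLt; have := r.isLt; simp; omega)⟩

lemma bfun_val {m n : ℕ} (r : Fin m) (hn : m - 1 ≤ n) (k : Fin (m - 1)) :
    ((bfun r hn k).val : Fin (n + 1)).val =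
      if k.val < r.val then k.val else k.val + (n + 2 - m) := by
  rw [bfun]
  split_ifs <;> rfl

lemma card_boundary {m n : ℕ} (r : Fin m) (hn : m - 1 ≤ n) :
    Nat.card {t : Fin (n + 1) // Boundary m r t} = m - 1 := by
  have hr := r.isLt
  have hbij : Function.Bijective (bfun r hn (n := n)) := by
    constructor
    · intro k1 k2 he
      have := k1.isLt; have := k2.isLt
      have hv : ((bfun r hn k1).val : Fin (n + 1)).val =
          ((bfun r hn k2).val : Fin (n + 1)).val := by rw [he]
      rw [bfun_val, bfun_val] at hv
      apply Fin.ext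
      split_ifs at hv <;> omega
    · rintro ⟨t, ht⟩
      have htl := t.isLt
      have hval : ∀ k : Fin (m - 1), ((bfun r hn k).val : Fin (n + 1)).val = t.val →
          bfun r hn k = ⟨t, ht⟩ := by
        intro k hk
        apply Subtype.ext; apply Fin.ext; exact hk
      rcases ht with h | h
      · refine ⟨⟨t.val, by omega⟩, hval _ ?_⟩
        rw [bfun_val]
        simp only
        rw [if_pos (show t.val < r.val from h)]
      · have hk : t.val - (n + 2 - m) < m - 1 := by omega
        refine ⟨⟨t.val - (n + 2 - m), hk⟩, hval _ ?_⟩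
        rw [bfun_val]
        simp only
        rw [if_neg (by omega)]
        omega
  have := Nat.card_eq_of_bijective _ hbij
  simpa using this.symm

section transfer

variable {m n : ℕ} (r : Fin m) (t : Fin (n + 1)) (π : Perm (Fin (n + 1)))
  (σ : Perm (Fin n))

lemma avoid_iff (hπt : π t = Fin.last n)
    (hπs : ∀ j : Fin n, π (t.succAbove j) = (σ j).castSucc) :
    ¬ ContainsClaw r π ↔ (Boundary m r t ∧ ¬ ContainsClaw r σ) := by
  have hm : 0 < m := r.pos
  have hr := r.isLt
  have ht := t.isLt
  constructor
  · intro h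
    constructor
    · -- Boundary
      by_contra hb
      rw [Boundary] at hb
      push_neg at hb
      obtain ⟨hb1, hb2⟩ := hb
      apply h
      have hlt' : ∀ j : Fin m, t.val - r.val + j.val < n + 1 := by
        intro j; have := j.isLt; omega
      refine ⟨fun j => ⟨t.val - r.val + j.val, hlt' j⟩, ?_, ?_⟩
      · intro j1 j2 hj
        rw [Fin.lt_def] at hj ⊢
        simp only
        omega
      · intro j hj
        have hjr : j.val ≠ r.val := fun hc => hj (Fin.ext hc)
        have hir : (⟨t.val - r.val + r.val, hlt' r⟩ : Fin (n + 1)) = t :=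
          Fin.ext (by simp only; omega)
        show π ⟨t.val - r.val + j.val, hlt' j⟩ < π ⟨t.val - r.val + r.val, hlt' r⟩
        rw [hir, hπt]
        have hne : π ⟨t.val - r.val + j.val, hlt' j⟩ ≠ Fin.last n := by
          rw [← hπt]
          intro hc
          have := congrArg Fin.val (π.injective hc)
          simp only at this
          omega
        exact lt_of_le_of_ne (Fin.le_last _) hne
    · -- σ avoids
      rintro ⟨i, hi, hlt⟩
      apply h
      refine ⟨fun j => t.succAbove (i j), (Fin.strictMono_succAbove t).comp hi, ?_⟩
      intro j hj
      rw [hπs, hπs]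
      exact Fin.castSucc_lt_castSucc_iff.mpr (hlt j hj)
  · rintro ⟨hb, hσ⟩ ⟨i, hi, hlt⟩
    by_cases hir : i r = t
    · -- apex value is the maximum; contradicts Boundary
      have h1 : (i ⟨0, hm⟩).val + r.val ≤ (i r).val :=
        strictMono_gap hi r.val ⟨0, hm⟩ r (show 0 + r.val = r.val by omega)
      have h2 : (i r).val + (m - 1 - r.val) ≤ (i ⟨m - 1, by omega⟩).val :=
        strictMono_gap hi (m - 1 - r.val) r ⟨m - 1, by omega⟩
          (show r.val + (m - 1 - r.val) = m - 1 by omega)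
      have h3 := (i ⟨m - 1, by omega⟩).isLt
      have hrt : (i r).val = t.val := by rw [hir]
      rcases hb with hcase | hcase <;> omega
    · -- apex value below maximum: project to σ
      have hne : ∀ j : Fin m, i j ≠ t := by
        intro j
        by_cases hjr : j = r
        · subst hjr; exact hir
        · intro hc
          have h1 := hlt j hjr
          rw [hc, hπt] at h1
          exact absurd h1 (Fin.not_lt.mpr (Fin.le_last _))
      choose i' hi' using fun j => Fin.exists_succAbove_eq (hne j)
      apply hσ
      refine ⟨i', ?_, ?_⟩
      · intro j1 j2 hj
        have h12 : t.succAbove (i' j1) < t.succAbove (i' j2) := by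
          rw [hi', hi']; exact hi hj
        exact (Fin.strictMono_succAbove t).lt_iff_lt.mp h12
      · intro j hj
        have e1 : (σ (i' j)).castSucc = π (i j) := by rw [← hπs, hi']
        have e2 : (σ (i' r)).castSucc = π (i r) := by rw [← hπs, hi']
        have h1 := hlt j hj
        rw [← e1, ← e2] at h1
        exact Fin.castSucc_lt_castSucc_iff.mp h1

end transfer

def insMax {n : ℕ} (t : Fin (n + 1)) (σ : Perm (Fin n)) : Perm (Fin (n + 1)) :=
  (finSuccEquiv' t).trans ((Equiv.optionCongr σ).trans (finSuccEquiv' (Fin.last n)).symm)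

lemma insMax_t {n : ℕ} (t : Fin (n + 1)) (σ : Perm (Fin n)) :
    insMax t σ t = Fin.last n := by
  simp [insMax, finSuccEquiv'_at, finSuccEquiv'_symm_none]

lemma insMax_s {n : ℕ} (t : Fin (n + 1)) (σ : Perm (Fin n)) (j : Fin n) :
    insMax t σ (t.succAbove j) = (σ j).castSucc := by
  simp [insMax, finSuccEquiv'_succAbove, finSuccEquiv'_symm_some, Fin.succAbove_last]

def G {m n : ℕ} (r : Fin m)
    (p : {t : Fin (n + 1) // Boundary m r t} × {σ : Perm (Fin n) // ¬ ContainsClaw r σ}) :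
    {π : Perm (Fin (n + 1)) // ¬ ContainsClaw r π} :=
  ⟨insMax p.1.1 p.2.1,
    (avoid_iff r p.1.1 (insMax p.1.1 p.2.1) p.2.1 (insMax_t _ _) (insMax_s _ _)).mpr
      ⟨p.1.2, p.2.2⟩⟩

lemma step {m n : ℕ} (r : Fin m) (hn : m - 1 ≤ n) :
    Nat.card {π : Perm (Fin (n + 1)) // ¬ ContainsClaw r π} =
      (m - 1) * Nat.card {σ : Perm (Fin n) // ¬ ContainsClaw r σ} := by
  have hbij : Function.Bijective (G r (n := n)) := by
    constructor
    · rintro ⟨⟨t1, hb1⟩, ⟨σ1, hσ1⟩⟩ ⟨⟨t2, hb2⟩, ⟨σ2, hσ2⟩⟩ he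
      have heq : insMax t1 σ1 = insMax t2 σ2 := congrArg Subtype.val he
      have ht : t1 = t2 := by
        by_contra hc
        obtain ⟨j, hj⟩ := Fin.exists_succAbove_eq hc
        have h1 : insMax t2 σ2 t1 = Fin.last n := by rw [← heq, insMax_t]
        rw [← hj, insMax_s] at h1
        exact absurd h1 (Fin.castSucc_lt_last _).ne
      subst ht
      have hσ : σ1 = σ2 := by
        apply Equiv.ext
        intro j
        have h1 : insMax t1 σ1 (t1.succAbove j) = insMax t1 σ2 (t1.succAbove j) := by
          rw [heq]
        rw [insMax_s, insMax_s] at h1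
        exact Fin.castSucc_injective _ h1
      subst hσ
      rfl
    · rintro ⟨π, hπ⟩
      obtain ⟨t, hπt⟩ : ∃ t, π t = Fin.last n := ⟨π.symm _, π.apply_symm_apply _⟩
      have hnl : ∀ j : Fin n, π (t.succAbove j) ≠ Fin.last n := by
        intro j hc
        rw [← hπt] at hc
        exact Fin.succAbove_ne t j (π.injective hc)
      have hfinj : Function.Injective
          (fun j : Fin n => (π (t.succAbove j)).castPred (hnl j)) := by
        intro j1 j2 hj
        have h1 : π (t.succAbove j1) = π (t.succAbove j2) := by
          have := congrArg Fin.castSucc hj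
          simpa [Fin.castSucc_castPred] using this
        exact Fin.succAbove_right_injective (π.injective h1)
      obtain ⟨σ, hπs⟩ : ∃ σ : Perm (Fin n), ∀ j, π (t.succAbove j) = (σ j).castSucc :=
        ⟨Equiv.ofBijective _ (Finite.injective_iff_bijective.mp hfinj), fun j => by
          simp [Equiv.ofBijective_apply, Fin.castSucc_castPred]⟩
      obtain ⟨hb, hσav⟩ := (avoid_iff r t π σ hπt hπs).mp hπ
      refine ⟨⟨⟨t, hb⟩, ⟨σ, hσav⟩⟩, ?_⟩
      apply Subtype.ext
      apply Equiv.ext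
      intro x
      show insMax t σ x = π x
      by_cases hx : x = t
      · subst hx; rw [insMax_t, hπt]
      · obtain ⟨j, hj⟩ := Fin.exists_succAbove_eq hx
        rw [← hj, insMax_s, hπs]
  calc Nat.card {π : Perm (Fin (n + 1)) // ¬ ContainsClaw r π}
      = Nat.card ({t : Fin (n + 1) // Boundary m r t} ×
          {σ : Perm (Fin n) // ¬ ContainsClaw r σ}) := (Nat.card_eq_of_bijective _ hbij).symm
    _ = (m - 1) * Nat.card {σ : Perm (Fin n) // ¬ ContainsClaw r σ} := by
        rw [Nat.card_prod, card_boundary r hn]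

lemma base {m : ℕ} (r : Fin m) :
    Nat.card {π : Perm (Fin (m - 1)) // ¬ ContainsClaw r π} = (m - 1).factorial := by
  have hall : ∀ π : Perm (Fin (m - 1)), ¬ ContainsClaw r π := by
    rintro π ⟨i, hi, -⟩
    have h1 := Fintype.card_le_of_injective i hi.injective
    simp only [Fintype.card_fin] at h1
    have := r.pos
    omega
  rw [Nat.card_congr (Equiv.subtypeUnivEquiv hall)]
  simp [Nat.card_eq_fintype_card, Fintype.card_perm]

lemma main {m : ℕ} (r : Fin m) (n : ℕ) (hn : m - 1 ≤ n) :
    Nat.card {π : Perm (Fin n) // ¬ ContainsClaw r π} =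
      (m - 1).factorial * (m - 1) ^ (n - (m - 1)) := by
  induction n, hn using Nat.le_induction with
  | base =>
    rw [base r]
    simp
  | succ n hn ih =>
    rw [step r hn, ih]
    rw [show n + 1 - (m - 1) = (n - (m - 1)) + 1 by omega, pow_succ]
    ring

end ClawAux

/-- For `m ≥ 1`, any position `r`, and `n ≥ m`, the number of
permutations of `{1,…,n}` avoiding the size-`m` claw POP with maximal element
in position `r` is `(m-1)! * (m-1)^(n-m+1)`. -/
theorem stmt_8 (m n : ℕ) (hm : 1 ≤ m) (r : Fin m) (h : m ≤ n) :
    Nat.card {π : Equiv.Perm (Fin n) // ¬ ContainsClaw r π} =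
      Nat.factorial (m - 1) * (m - 1) ^ (n - m + 1) := by
  have := ClawAux.main r n (by omega)
  rwa [show n - (m - 1) = n - m + 1 by omega] at this
end

section
/- For n ≥ 1 and m ≥ 2, the number of permutations of {1,…,n} in which no m consecutive entries have their maximum at the first position of the window (equivalently, avoiding the claw POP of size m with maximal element in position 1) satisfies the recurrence: a_n = n! for n < m, and a_n = (m-1)·a_{n-1} for n ≥ m. -/
/-- The number of permutations of length `n` avoiding the size-`m` claw POP
whose maximal element is in the first position. -/
noncomputable def avoidFirstClaw (m : ℕ) (hm : 0 < m) (n : ℕ) : ℕ :=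
  Nat.card {π : Equiv.Perm (Fin n) // ¬ ContainsClaw (⟨0, hm⟩ : Fin m) π}

namespace StmtAux

open Equiv Finset

lemma strictMono_cons {N k : ℕ} {x : Fin N} {f : Fin k → Fin N}
    (hf : StrictMono f) (hx : ∀ j, x < f j) : StrictMono (Fin.cons x f) := by
  intro a b hab
  induction a using Fin.cases with
  | zero =>
    induction b using Fin.cases with
    | zero => exact absurd hab (lt_irrefl _)
    | succ j => simpa using hx j
  | succ i =>
    induction b using Fin.cases with
    | zero => exact absurd hab (by simp)
    | succ j =>
      simp only [Fin.cons_succ]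
      exact hf (by simpa using hab)

variable {n : ℕ}

def reduce (π : Equiv.Perm (Fin (n + 1))) : Equiv.Perm (Fin n) :=
  Equiv.removeNone ((finSuccEquiv' 0).symm.trans
    ((π : Fin (n + 1) ≃ Fin (n + 1)).trans (finSuccEquiv' (π 0))))

lemma succAbove_reduce (π : Equiv.Perm (Fin (n + 1))) (i : Fin n) :
    (π 0).succAbove (reduce π i) = π i.succ := by
  obtain ⟨v, hv⟩ : ∃ v, (π 0).succAbove v = π i.succ :=
    Fin.exists_succAbove_eq (fun h => (Fin.succ_ne_zero i) (π.injective h))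
  have he : ((finSuccEquiv' 0).symm.trans
      ((π : Fin (n + 1) ≃ Fin (n + 1)).trans (finSuccEquiv' (π 0)))) (some i) = some v := by
    rw [Equiv.trans_apply, Equiv.trans_apply, finSuccEquiv'_symm_some,
      Fin.succAbove_zero]
    show finSuccEquiv' (π 0) (π i.succ) = some v
    rw [← hv, finSuccEquiv'_succAbove]
  have h2 := Equiv.removeNone_some _ ⟨v, he⟩
  rw [he] at h2
  have : reduce π i = v := Option.some_injective _ h2
  rw [this, hv]

lemma claw_iff {k : ℕ} (hk : 1 ≤ k) (π : Equiv.Perm (Fin (n + 1))) :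
    ContainsClaw (⟨0, Nat.succ_pos k⟩ : Fin (k + 1)) π ↔
      k ≤ (π 0 : ℕ) ∨ ContainsClaw (⟨0, Nat.succ_pos k⟩ : Fin (k + 1)) (reduce π) := by
  have hr0 : (⟨0, Nat.succ_pos k⟩ : Fin (k + 1)) = 0 := rfl
  rw [hr0]
  constructor
  · rintro ⟨i, hmono, hlt⟩
    by_cases h0 : i 0 = 0
    · left
      have himg : (Finset.univ.erase (0 : Fin (k+1))).image (fun j => π (i j)) ⊆
          Finset.Iio (π 0) := by
        intro v hv
        simp only [Finset.mem_image, Finset.mem_erase, Finset.mem_univ, and_true] at hv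
        obtain ⟨j, hj, rfl⟩ := hv
        rw [Finset.mem_Iio]
        have := hlt j hj
        rwa [h0] at this
      have hcard : ((Finset.univ.erase (0 : Fin (k+1))).image (fun j => π (i j))).card = k := by
        have hinj : Function.Injective (fun j => π (i j)) := π.injective.comp hmono.injective
        rw [Finset.card_image_of_injOn hinj.injOn,
          Finset.card_erase_of_mem (Finset.mem_univ _), Finset.card_univ, Fintype.card_fin]
        omega
      have hle := Finset.card_le_card himg
      rwa [hcard, Fin.card_Iio] at hle
    · right
      have hne : ∀ j, i j ≠ 0 := by
        intro j
        rcases eq_or_ne j 0 with rfl | hj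
        · exact h0
        · have hlt' : i 0 < i j := hmono (Fin.pos_iff_ne_zero.mpr hj)
          intro h
          rw [h] at hlt'
          exact absurd hlt' (by simp)
      refine ⟨fun j => (i j).pred (hne j), ?_, ?_⟩
      · intro a b hab
        exact Fin.pred_lt_pred_iff.mpr (hmono hab)
      · intro j hj
        have h1 := hlt j hj
        have h2 : ∀ j', π (i j') = (π 0).succAbove (reduce π ((i j').pred (hne j'))) := by
          intro j'
          rw [succAbove_reduce, Fin.succ_pred]
        rw [h2 j, h2 0] at h1
        exact Fin.succAbove_lt_succAbove_iff.mp h1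
  · rintro (hle | ⟨i', hmono, hlt⟩)
    · have hScard : k ≤ (Finset.univ.filter (fun q : Fin (n+1) => π q < π 0)).card := by
        have hseq : Finset.univ.filter (fun q : Fin (n+1) => π q < π 0) =
            Finset.image (⇑π.symm) (Finset.Iio (π 0)) := by
          ext q
          simp only [Finset.mem_filter, Finset.mem_univ, true_and, Finset.mem_image,
            Finset.mem_Iio]
          constructor
          · intro h; exact ⟨π q, h, by simp⟩
          · rintro ⟨v, hv, rfl⟩; simpa using hv
        rw [hseq, Finset.card_image_of_injective _ π.symm.injective, Fin.card_Iio]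
        exact hle
      obtain ⟨T, hTS, hT⟩ := Finset.exists_subset_card_eq hScard
      set f := T.orderEmbOfFin hT with hf
      have hflt : ∀ j, π (f j) < π 0 := by
        intro j
        have := hTS (T.orderEmbOfFin_mem hT j)
        simpa using this
      have hf0 : ∀ j, (0 : Fin (n+1)) < f j := by
        intro j
        refine Fin.pos_iff_ne_zero.mpr ?_
        intro h
        have := hflt j
        rw [h] at this
        exact absurd this (lt_irrefl _)
      refine ⟨Fin.cons 0 (fun j => f j),
        strictMono_cons (fun a b hab => f.strictMono hab) hf0, ?_⟩
      intro j hj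
      obtain ⟨j', rfl⟩ := Fin.eq_succ_of_ne_zero hj
      rw [Fin.cons_zero, Fin.cons_succ]
      exact hflt j'
    · refine ⟨fun j => (i' j).succ, fun a b hab => Fin.succ_lt_succ_iff.mpr (hmono hab), ?_⟩
      intro j hj
      have h2 : ∀ j', π ((i' j').succ) = (π 0).succAbove (reduce π (i' j')) :=
        fun j' => (succAbove_reduce π (i' j')).symm
      rw [h2 j, h2 0]
      exact Fin.succAbove_lt_succAbove_iff.mpr (hlt j hj)

def build (p : Fin (n + 1)) (σ : Equiv.Perm (Fin n)) : Equiv.Perm (Fin (n + 1)) :=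
  (finSuccEquiv' 0).trans (σ.optionCongr.trans (finSuccEquiv' p).symm)

lemma build_zero (p : Fin (n + 1)) (σ : Equiv.Perm (Fin n)) : build p σ 0 = p := by
  simp [build, Equiv.trans_apply, finSuccEquiv'_at, finSuccEquiv'_symm_none]

lemma build_succ (p : Fin (n + 1)) (σ : Equiv.Perm (Fin n)) (i : Fin n) :
    build p σ i.succ = p.succAbove (σ i) := by
  have h0 : finSuccEquiv' (0 : Fin (n + 1)) i.succ = some i := by
    rw [← Fin.succAbove_zero, finSuccEquiv'_succAbove]
  simp [build, Equiv.trans_apply, h0, finSuccEquiv'_symm_some]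

def E : Equiv.Perm (Fin (n + 1)) ≃ Fin (n + 1) × Equiv.Perm (Fin n) where
  toFun π := (π 0, reduce π)
  invFun x := build x.1 x.2
  left_inv π := by
    apply Equiv.ext
    intro x
    induction x using Fin.cases with
    | zero => exact build_zero _ _
    | succ i => rw [build_succ, succAbove_reduce]
  right_inv := by
    rintro ⟨p, σ⟩
    have h0 : build p σ 0 = p := build_zero p σ
    refine Prod.ext h0 ?_
    show reduce (build p σ) = σ
    apply Equiv.ext
    intro i
    apply Fin.succAbove_right_injective (p := p)
    have := succAbove_reduce (build p σ) i
    rw [h0] at this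
    rw [this, build_succ]


lemma card_lt_subtype (N k : ℕ) (hk : k ≤ N + 1) :
    Nat.card {p : Fin (N + 1) // (p : ℕ) < k} = k := by
  have e : {p : Fin (N + 1) // (p : ℕ) < k} ≃ Fin k :=
    { toFun := fun p => ⟨p.1, p.2⟩
      invFun := fun q => ⟨⟨q.1, lt_of_lt_of_le q.2 hk⟩, q.2⟩
      left_inv := fun p => rfl
      right_inv := fun q => rfl }
  rw [Nat.card_congr e, Nat.card_eq_fintype_card, Fintype.card_fin]

end StmtAux

/-- For `n ≥ 1` and `m ≥ 2`, the count `a_n` of permutations of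
`{1,…,n}` avoiding the size-`m` claw POP with maximal element in position `1`
(no `m` consecutive entries have their maximum at the first position of the
window) satisfies `a_n = n!` for `n < m` and `a_n = (m-1) * a_{n-1}` for
`n ≥ m`. -/
theorem stmt_15 (m n : ℕ) (hm : 2 ≤ m) (hn : 1 ≤ n) :
    (n < m → avoidFirstClaw m (by omega) n = Nat.factorial n) ∧
      (m ≤ n → avoidFirstClaw m (by omega) n =
        (m - 1) * avoidFirstClaw m (by omega) (n - 1)) := by
  obtain ⟨k, rfl⟩ : ∃ k, m = k + 1 := ⟨m - 1, by omega⟩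
  have hk : 1 ≤ k := by omega
  constructor
  · intro hnm
    have hall : ∀ π : Equiv.Perm (Fin n),
        ¬ ContainsClaw (⟨0, by omega⟩ : Fin (k + 1)) π := by
      rintro π ⟨i, hmono, -⟩
      have h1 := Fintype.card_le_of_injective i hmono.injective
      simp only [Fintype.card_fin] at h1
      omega
    unfold avoidFirstClaw
    rw [Nat.card_congr (Equiv.subtypeUnivEquiv hall), Nat.card_eq_fintype_card,
      Fintype.card_perm, Fintype.card_fin]
  · intro hmn
    obtain ⟨N, rfl⟩ : ∃ N, n = N + 1 := ⟨n - 1, by omega⟩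
    unfold avoidFirstClaw
    have hsimp : (k + 1 - 1 : ℕ) = k := by omega
    have hsimp2 : (N + 1 - 1 : ℕ) = N := by omega
    rw [hsimp, hsimp2]
    have key : ∀ π : Equiv.Perm (Fin (N + 1)),
        (¬ ContainsClaw (⟨0, by omega⟩ : Fin (k + 1)) π) ↔
          (((StmtAux.E π).1 : ℕ) < k ∧
            ¬ ContainsClaw (⟨0, by omega⟩ : Fin (k + 1)) (StmtAux.E π).2) := by
      intro π
      have h := StmtAux.claw_iff hk π
      have hE1 : (StmtAux.E π).1 = π 0 := rfl
      have hE2 : (StmtAux.E π).2 = StmtAux.reduce π := rfl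
      rw [hE1, hE2]
      constructor
      · intro hnc
        rw [h] at hnc
        push_neg at hnc
        exact ⟨by omega, hnc.2⟩
      · intro ⟨h1, h2⟩
        rw [h]
        push_neg
        exact ⟨by omega, h2⟩
    calc Nat.card {π : Equiv.Perm (Fin (N + 1)) //
            ¬ ContainsClaw (⟨0, by omega⟩ : Fin (k + 1)) π}
        = Nat.card {x : Fin (N + 1) × Equiv.Perm (Fin N) //
            ((x.1 : ℕ) < k ∧ ¬ ContainsClaw (⟨0, by omega⟩ : Fin (k + 1)) x.2)} :=
          Nat.card_congr (StmtAux.E.subtypeEquiv key)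
      _ = Nat.card ({p : Fin (N + 1) // (p : ℕ) < k} ×
            {σ : Equiv.Perm (Fin N) // ¬ ContainsClaw (⟨0, by omega⟩ : Fin (k + 1)) σ}) :=
          Nat.card_congr (Equiv.subtypeProdEquivProd (p := fun p : Fin (N + 1) => (p : ℕ) < k)
            (q := fun σ : Equiv.Perm (Fin N) => ¬ ContainsClaw (⟨0, by omega⟩ : Fin (k + 1)) σ))
      _ = k * Nat.card {σ : Equiv.Perm (Fin N) //
            ¬ ContainsClaw (⟨0, by omega⟩ : Fin (k + 1)) σ} := by
          rw [Nat.card_prod, StmtAux.card_lt_subtype N k (by omega)]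
end
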